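/- Let G be an ω-narrow semitopological group acting separately continuously and transitively on a Baire space X, and suppose x ∈ X and U is a neighborhood of the identity e in G. Then the closure of U·x = {g·x : g ∈ U} in X has nonempty interior. -/

import Mathlib

open Pointwise

/-! In a Baire space a countable cover by closed sets has a member with nonempty interior.
By ω-narrowness `G = A * U` for a countable `A`, so transitivity makes the translates
`a · (U · x)`, `a ∈ A`, cover `X`; some `closure (a · (U · x)) = a · closure (U · x)` has
nonempty interior, and since `a` acts by a homeomorphism so does `closure (U · x)`. -/

theorem nonempty_interior_closure_of_iUnion_homeomorph_image_eq_univ {X ι : Type*}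
    [TopologicalSpace X] [BaireSpace X] [Nonempty X] [Countable ι]
    (e : ι → X ≃ₜ X) (S : Set X) (hcover : (⋃ i, e i '' S) = Set.univ) :
    (interior (closure S)).Nonempty := by
  have hcover' : (⋃ i, closure (e i '' S)) = Set.univ :=
    Set.eq_univ_of_univ_subset <| hcover ▸ Set.iUnion_mono fun _ => subset_closure
  obtain ⟨i, hi⟩ := nonempty_interior_of_iUnion_of_closed (fun _ => isClosed_closure) hcover'
  rw [← Homeomorph.image_closure, ← Homeomorph.image_interior] at hi
  exact hi.of_image

def actionHomeomorph {G X : Type*} [Group G] [TopologicalSpace X] (θ : G → X → X)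
    (hone : ∀ x : X, θ 1 x = x) (hcomp : ∀ (g h : G) (x : X), θ (g * h) x = θ g (θ h x))
    (hcont : ∀ g : G, Continuous (θ g)) (g : G) : X ≃ₜ X where
  toFun := θ g
  invFun := θ g⁻¹
  left_inv y := by rw [← hcomp, inv_mul_cancel, hone]
  right_inv y := by rw [← hcomp, mul_inv_cancel, hone]
  continuous_toFun := hcont g
  continuous_invFun := hcont g⁻¹

theorem iUnion_image_image_orbit_eq_univ {G X : Type*} [Group G] (θ : G → X → X)
    (hcomp : ∀ (g h : G) (x : X), θ (g * h) x = θ g (θ h x))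
    {A U : Set G} (hAU : A * U = Set.univ) (x : X)
    (htrans : Function.Surjective fun g : G => θ g x) :
    (⋃ a : A, θ a '' ((fun g : G => θ g x) '' U)) = Set.univ := by
  refine Set.eq_univ_of_forall fun y => ?_
  obtain ⟨g, rfl⟩ := htrans y
  obtain ⟨a, ha, u, hu, rfl⟩ : g ∈ A * U := hAU ▸ Set.mem_univ g
  exact Set.mem_iUnion.2 ⟨⟨a, ha⟩, θ u x, ⟨u, hu, rfl⟩, (hcomp a u x).symm⟩

theorem closure_nhds_orbit_interior_nonempty_general {G X : Type*} [Group G] [TopologicalSpace G]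
    [TopologicalSpace X] [BaireSpace X]
    (hnarrow : ∀ U ∈ nhds (1 : G), ∃ A : Set G, A.Countable ∧ U * A = Set.univ ∧
      A * U = Set.univ)
    (θ : G → X → X)
    (hone : ∀ x : X, θ 1 x = x)
    (hcomp : ∀ (g h : G) (x : X), θ (g * h) x = θ g (θ h x))
    (hsep₁ : ∀ g : G, Continuous (θ g))
    (htrans : ∀ x : X, Function.Surjective fun g : G => θ g x)
    (x : X) (U : Set G) (hU : U ∈ nhds (1 : G)) :
    (interior (closure ((fun g : G => θ g x) '' U))).Nonempty := by
  obtain ⟨A, hAc, -, hAU⟩ := hnarrow U hU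
  have : Countable A := hAc.to_subtype
  have : Nonempty X := ⟨x⟩
  exact nonempty_interior_closure_of_iUnion_homeomorph_image_eq_univ
    (fun a : A => actionHomeomorph θ hone hcomp hsep₁ a) _
    (iUnion_image_image_orbit_eq_univ θ hcomp hAU x (htrans x))

/-- For a separately continuous transitive action of an ω-narrow
semitopological group `G` on a Baire space `X`, and any neighborhood `U` of the
identity, the closure of `U·x` has nonempty interior. -/
theorem closure_nhds_orbit_interior_nonempty {G X : Type*} [Group G] [TopologicalSpace G]
    [TopologicalSpace X] [BaireSpace X]
    (hmul_left : ∀ g : G, Continuous fun h : G => g * h)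
    (hmul_right : ∀ g : G, Continuous fun h : G => h * g)
    (hnarrow : ∀ U ∈ nhds (1 : G), ∃ A : Set G, A.Countable ∧ U * A = Set.univ ∧
      A * U = Set.univ)
    (θ : G → X → X)
    (hone : ∀ x : X, θ 1 x = x)
    (hcomp : ∀ (g h : G) (x : X), θ (g * h) x = θ g (θ h x))
    (hsep₁ : ∀ g : G, Continuous (θ g))
    (hsep₂ : ∀ x : X, Continuous fun g : G => θ g x)
    (htrans : ∀ x : X, Function.Surjective fun g : G => θ g x)
    (x : X) (U : Set G) (hU : U ∈ nhds (1 : G)) :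
    (interior (closure ((fun g : G => θ g x) '' U))).Nonempty :=
  closure_nhds_orbit_interior_nonempty_general hnarrow θ hone hcomp hsep₁ htrans x U hU
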